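/- Let K be a field with r_i, s_i ∈ K× satisfying r_i^2 ≠ s_i^2 for each i, λ = (λ_1,…,λ_n) ∈ (K×)^n, and signs ζ_i, ζ_i' ∈ {±1}. On the vector space V with basis {v(k) : k ∈ ℕ^n}, define ρ_i v(k) = r_i^{k_i} λ_i ζ_i v(k), σ_i v(k) = s_i^{k_i} λ_i ζ_i' v(k), x_i v(k) = v(k+ε_i), y_i v(k) = [k_i]_i λ_i^2 v(k−ε_i) (with v(ℓ)=0 if ℓ ∉ ℕ^n). Then these operators satisfy the defining relations (R1)–(R5) of A_{r,s}(n), making V(λ,ζ) an A_{r,s}(n)-module (a Verma module). -/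

import Mathlib

/-- Build a linear operator on `ι →₀ K` from its values on the basis. -/
noncomputable def mkOp {K : Type*} [Field K] {ι : Type*} (f : ι → (ι →₀ K)) :
    (ι →₀ K) →ₗ[K] (ι →₀ K) :=
  Finsupp.lsum K fun k => LinearMap.toSpanSingleton K (ι →₀ K) (f k)

/-- The quantum-type integer `[m] = (r^{2m} - s^{2m})/(r² - s²)`. -/
noncomputable def qint {K : Type*} [Field K] (r s : K) (m : ℕ) : K :=
  (r ^ (2 * m) - s ^ (2 * m)) / (r ^ 2 - s ^ 2)

section ops
variable {K : Type*} [Field K] {n : ℕ}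

/-- `ρ_i v(k) = r_i^{k_i} λ_i ζ_i v(k)` (and the analogous `σ_i` by substituting `s, ζ'`). -/
noncomputable def rhoVOp (r lam zeta : Fin n → K) (i : Fin n) :
    ((Fin n → ℕ) →₀ K) →ₗ[K] ((Fin n → ℕ) →₀ K) :=
  mkOp fun k => Finsupp.single k (r i ^ k i * lam i * zeta i)

/-- inverse of `rhoVOp`. -/
noncomputable def rhoVInvOp (r lam zeta : Fin n → K) (i : Fin n) :
    ((Fin n → ℕ) →₀ K) →ₗ[K] ((Fin n → ℕ) →₀ K) :=
  mkOp fun k => Finsupp.single k ((r i ^ k i * lam i * zeta i)⁻¹)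

/-- `x_i v(k) = v(k + ε_i)`. -/
noncomputable def xVOp (i : Fin n) :
    ((Fin n → ℕ) →₀ K) →ₗ[K] ((Fin n → ℕ) →₀ K) :=
  mkOp fun k => Finsupp.single (Function.update k i (k i + 1)) (1 : K)

/-- `y_i v(k) = [k_i]_i λ_i² v(k - ε_i)` (zero when `k_i = 0`, since `[0] = 0`). -/
noncomputable def yVOp (r s lam : Fin n → K) (i : Fin n) :
    ((Fin n → ℕ) →₀ K) →ₗ[K] ((Fin n → ℕ) →₀ K) :=
  mkOp fun k => (qint (r i) (s i) (k i) * lam i ^ 2) •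
    Finsupp.single (Function.update k i (k i - 1)) (1 : K)

end ops

/-!
On the basis vectors `v(k)` the operators `ρ_i`, `σ_i` are diagonal and `x_i`, `y_i` are weighted
shifts, so each relation is a comparison of two scalar multiples of one basis vector. The only
relation with content is (R5): `y_i x_i` and `x_i y_i` act on `v(k)` by `[k_i + 1] λ_i²` and
`[k_i] λ_i²`, and `[m + 1] = r²[m] + s^{2m}`, while `ζ'_i² = 1` makes `σ_i²` act by
`s^{2k_i} λ_i²`.
The second half of (R5) follows from the first because `[m]` is symmetric in `r` and `s`.
-/

open Function
open Finsupp (single lhom_ext smul_single)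

section QInt
variable {K : Type*} [Field K]

@[simp] lemma qint_zero (r s : K) : qint r s 0 = 0 := by simp [qint]

lemma qint_comm (r s : K) (m : ℕ) : qint r s m = qint s r m := by
  rw [qint, qint, ← neg_sub, ← neg_sub (s ^ 2), neg_div_neg_eq]

lemma qint_succ {r s : K} (h : r ^ 2 ≠ s ^ 2) (m : ℕ) :
    qint r s (m + 1) = r ^ 2 * qint r s m + s ^ (2 * m) := by
  have h' : r ^ 2 - s ^ 2 ≠ 0 := sub_ne_zero.mpr h
  simp only [qint]
  field_simp
  ring

end QInt

@[simp] lemma mkOp_single {K : Type*} [Field K] {ι : Type*} (f : ι → (ι →₀ K)) (a : ι)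
    (b : K) : mkOp f (single a b) = b • f a := by
  simp [mkOp, LinearMap.toSpanSingleton_apply]

section Operators
variable {K : Type*} [Field K] {n : ℕ}

lemma rhoVOp_single (a lam z : Fin n → K) (i : Fin n) (k : Fin n → ℕ) (c : K) :
    rhoVOp a lam z i (single k c) = single k (c * (a i ^ k i * lam i * z i)) := by
  simp only [rhoVOp, mkOp_single, smul_single, smul_eq_mul]

lemma rhoVInvOp_single (a lam z : Fin n → K) (i : Fin n) (k : Fin n → ℕ) (c : K) :
    rhoVInvOp a lam z i (single k c) = single k (c * (a i ^ k i * lam i * z i)⁻¹) := by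
  simp only [rhoVInvOp, mkOp_single, smul_single, smul_eq_mul]

lemma xVOp_single (i : Fin n) (k : Fin n → ℕ) (c : K) :
    xVOp i (single k c) = single (update k i (k i + 1)) c := by
  simp [xVOp]

lemma yVOp_single (r s lam : Fin n → K) (i : Fin n) (k : Fin n → ℕ) (c : K) :
    yVOp r s lam i (single k c)
      = single (update k i (k i - 1)) (c * (qint (r i) (s i) (k i) * lam i ^ 2)) := by
  simp only [yVOp, mkOp_single, smul_single, smul_eq_mul, mul_one]

lemma yVOp_swap (r s lam : Fin n → K) : yVOp r s lam = yVOp s r lam := by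
  ext i : 1
  simp only [yVOp, qint_comm (r _) (s _)]

lemma rhoVOp_comp_comm (a b lam za zb : Fin n → K) (i j : Fin n) :
    rhoVOp a lam za i ∘ₗ rhoVOp b lam zb j = rhoVOp b lam zb j ∘ₗ rhoVOp a lam za i := by
  refine lhom_ext fun k c => ?_
  simp only [LinearMap.comp_apply, rhoVOp_single]
  ring_nf

lemma rhoVOp_comp_rhoVInvOp {a lam z : Fin n → K} {i : Fin n}
    (ha : a i ≠ 0) (hlam : lam i ≠ 0) (hz : z i ≠ 0) :
    rhoVOp a lam z i ∘ₗ rhoVInvOp a lam z i = LinearMap.id ∧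
    rhoVInvOp a lam z i ∘ₗ rhoVOp a lam z i = LinearMap.id := by
  constructor <;> refine lhom_ext fun k c => ?_ <;>
    simp only [LinearMap.comp_apply, LinearMap.id_apply, rhoVOp_single, rhoVInvOp_single] <;>
    field_simp

lemma rhoVOp_comp_xVOp (a lam z : Fin n → K) (i j : Fin n) :
    rhoVOp a lam z i ∘ₗ xVOp j
      = (if i = j then a i else 1) • (xVOp j ∘ₗ rhoVOp a lam z i) := by
  refine lhom_ext fun k c => ?_
  simp only [LinearMap.comp_apply, LinearMap.smul_apply, rhoVOp_single, xVOp_single,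
    smul_single, smul_eq_mul]
  by_cases h : i = j
  · subst h
    simp only [update_self, if_true]
    ring_nf
  · simp only [update_of_ne h, if_neg h]
    ring_nf

lemma rhoVOp_comp_yVOp {r s a lam z : Fin n → K} {i : Fin n} (ha : a i ≠ 0) (j : Fin n) :
    rhoVOp a lam z i ∘ₗ yVOp r s lam j
      = (if i = j then a i else 1)⁻¹ • (yVOp r s lam j ∘ₗ rhoVOp a lam z i) := by
  refine lhom_ext fun k c => ?_
  simp only [LinearMap.comp_apply, LinearMap.smul_apply, rhoVOp_single, yVOp_single,
    smul_single, smul_eq_mul]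
  by_cases h : i = j
  · subst h
    simp only [update_self, if_true]
    congr 1
    rcases hk : k i with _ | m
    · simp
    · rw [Nat.add_sub_cancel]
      field_simp
      ring
  · simp only [update_of_ne h, if_neg h, inv_one]
    ring_nf

lemma xVOp_comp_comm (i j : Fin n) :
    xVOp (K := K) (n := n) i ∘ₗ xVOp j = xVOp j ∘ₗ xVOp i := by
  refine lhom_ext fun k c => ?_
  rcases eq_or_ne i j with rfl | h
  · rfl
  · simp only [LinearMap.comp_apply, xVOp_single, update_of_ne h, update_of_ne h.symm,
      update_comm h]

lemma yVOp_comp_comm (r s lam : Fin n → K) (i j : Fin n) :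
    yVOp r s lam i ∘ₗ yVOp r s lam j = yVOp r s lam j ∘ₗ yVOp r s lam i := by
  refine lhom_ext fun k c => ?_
  rcases eq_or_ne i j with rfl | h
  · rfl
  · simp only [LinearMap.comp_apply, yVOp_single, update_of_ne h, update_of_ne h.symm,
      update_comm h]
    ring_nf

lemma yVOp_comp_xVOp_of_ne (r s lam : Fin n → K) {i j : Fin n} (h : i ≠ j) :
    yVOp r s lam i ∘ₗ xVOp j = xVOp j ∘ₗ yVOp r s lam i := by
  refine lhom_ext fun k c => ?_
  simp only [LinearMap.comp_apply, yVOp_single, xVOp_single, update_of_ne h,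
    update_of_ne h.symm, update_comm h]

lemma xVOp_yVOp_single (r s lam : Fin n → K) (i : Fin n) (k : Fin n → ℕ) (c : K) :
    xVOp i (yVOp r s lam i (single k c))
      = single k (c * (qint (r i) (s i) (k i) * lam i ^ 2)) := by
  rw [yVOp_single, xVOp_single]
  rcases hk : k i with _ | m
  · simp
  · simp only [update_self, update_idem, Nat.add_sub_cancel]
    rw [← hk, update_eq_self]

lemma yVOp_xVOp_single (r s lam : Fin n → K) (i : Fin n) (k : Fin n → ℕ) (c : K) :
    yVOp r s lam i (xVOp i (single k c))
      = single k (c * (qint (r i) (s i) (k i + 1) * lam i ^ 2)) := by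
  simp only [xVOp_single, yVOp_single, update_self, update_idem, Nat.add_sub_cancel,
    update_eq_self]

lemma yVOp_comp_xVOp_sub_sq_smul (r s lam z : Fin n → K) {i : Fin n}
    (hrs : r i ^ 2 ≠ s i ^ 2) (hz : z i ^ 2 = 1) :
    yVOp r s lam i ∘ₗ xVOp i - r i ^ 2 • (xVOp i ∘ₗ yVOp r s lam i)
      = rhoVOp s lam z i ∘ₗ rhoVOp s lam z i := by
  refine lhom_ext fun k c => ?_
  simp only [LinearMap.sub_apply, LinearMap.smul_apply, LinearMap.comp_apply, yVOp_xVOp_single,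
    xVOp_yVOp_single, rhoVOp_single, smul_single, ← Finsupp.single_sub]
  congr 1
  rw [qint_succ hrs, pow_mul]
  linear_combination (-c * (s i ^ 2) ^ k i * lam i ^ 2) * hz

end Operators

/-- the Verma-module operators on `V(λ,ζ)` satisfy the defining relations
(R1)-(R5) of `A_{r,s}(n)`. -/
theorem stmt7 {K : Type*} [Field K] (n : ℕ)
    (r s lam zeta zeta' : Fin n → K)
    (hr : ∀ i, r i ≠ 0) (hs : ∀ i, s i ≠ 0) (hrs : ∀ i, (r i) ^ 2 ≠ (s i) ^ 2)
    (hlam : ∀ i, lam i ≠ 0)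
    (hzeta : ∀ i, zeta i = 1 ∨ zeta i = -1) (hzeta' : ∀ i, zeta' i = 1 ∨ zeta' i = -1) :
    -- (R1)
    (∀ i j : Fin n,
        rhoVOp r lam zeta i ∘ₗ rhoVOp r lam zeta j = rhoVOp r lam zeta j ∘ₗ rhoVOp r lam zeta i ∧
        rhoVOp (K := K) r lam zeta i ∘ₗ rhoVOp s lam zeta' j
          = rhoVOp s lam zeta' j ∘ₗ rhoVOp r lam zeta i ∧
        rhoVOp (K := K) s lam zeta' i ∘ₗ rhoVOp s lam zeta' j
          = rhoVOp s lam zeta' j ∘ₗ rhoVOp s lam zeta' i) ∧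
    (∀ i : Fin n,
        rhoVOp (K := K) r lam zeta i ∘ₗ rhoVInvOp r lam zeta i = LinearMap.id ∧
        rhoVInvOp (K := K) r lam zeta i ∘ₗ rhoVOp r lam zeta i = LinearMap.id ∧
        rhoVOp (K := K) s lam zeta' i ∘ₗ rhoVInvOp s lam zeta' i = LinearMap.id ∧
        rhoVInvOp (K := K) s lam zeta' i ∘ₗ rhoVOp s lam zeta' i = LinearMap.id) ∧
    -- (R2)
    (∀ i j : Fin n,
        rhoVOp r lam zeta i ∘ₗ xVOp j = (if i = j then r i else 1) • (xVOp j ∘ₗ rhoVOp r lam zeta i) ∧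
        rhoVOp r lam zeta i ∘ₗ yVOp r s lam j
          = (if i = j then r i else 1)⁻¹ • (yVOp r s lam j ∘ₗ rhoVOp r lam zeta i)) ∧
    -- (R3)
    (∀ i j : Fin n,
        rhoVOp s lam zeta' i ∘ₗ xVOp j = (if i = j then s i else 1) • (xVOp j ∘ₗ rhoVOp s lam zeta' i) ∧
        rhoVOp s lam zeta' i ∘ₗ yVOp r s lam j
          = (if i = j then s i else 1)⁻¹ • (yVOp r s lam j ∘ₗ rhoVOp s lam zeta' i)) ∧
    -- (R4)
    (∀ i j : Fin n,
        xVOp (K := K) (n := n) i ∘ₗ xVOp j = xVOp j ∘ₗ xVOp i ∧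
        yVOp r s lam i ∘ₗ yVOp r s lam j = yVOp r s lam j ∘ₗ yVOp r s lam i) ∧
    (∀ i j : Fin n, i ≠ j → yVOp r s lam i ∘ₗ xVOp j = xVOp j ∘ₗ yVOp r s lam i) ∧
    -- (R5)
    (∀ i : Fin n,
        yVOp r s lam i ∘ₗ xVOp i - (r i) ^ 2 • (xVOp i ∘ₗ yVOp r s lam i)
          = rhoVOp s lam zeta' i ∘ₗ rhoVOp s lam zeta' i ∧
        yVOp r s lam i ∘ₗ xVOp i - (s i) ^ 2 • (xVOp i ∘ₗ yVOp r s lam i)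
          = rhoVOp r lam zeta i ∘ₗ rhoVOp r lam zeta i) := by
  have hzeta2 : ∀ i, zeta i ^ 2 = 1 := fun i => sq_eq_one_iff.mpr (hzeta i)
  have hzeta2' : ∀ i, zeta' i ^ 2 = 1 := fun i => sq_eq_one_iff.mpr (hzeta' i)
  have hzeta0 : ∀ i, zeta i ≠ 0 := fun i => ne_zero_pow two_ne_zero (by simp [hzeta2])
  have hzeta0' : ∀ i, zeta' i ≠ 0 := fun i => ne_zero_pow two_ne_zero (by simp [hzeta2'])
  refine ⟨fun i j => ⟨rhoVOp_comp_comm .., rhoVOp_comp_comm .., rhoVOp_comp_comm ..⟩,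
    fun i => ?_, fun i j => ⟨rhoVOp_comp_xVOp .., rhoVOp_comp_yVOp (hr i) j⟩,
    fun i j => ⟨rhoVOp_comp_xVOp .., rhoVOp_comp_yVOp (hs i) j⟩,
    fun i j => ⟨xVOp_comp_comm i j, yVOp_comp_comm r s lam i j⟩,
    fun i j => yVOp_comp_xVOp_of_ne r s lam,
    fun i => ⟨yVOp_comp_xVOp_sub_sq_smul r s lam zeta' (hrs i) (hzeta2' i), ?_⟩⟩
  · obtain ⟨hr₁, hr₂⟩ := rhoVOp_comp_rhoVInvOp (hr i) (hlam i) (hzeta0 i)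
    obtain ⟨hs₁, hs₂⟩ := rhoVOp_comp_rhoVInvOp (hs i) (hlam i) (hzeta0' i)
    exact ⟨hr₁, hr₂, hs₁, hs₂⟩
  · rw [yVOp_swap r s]
    exact yVOp_comp_xVOp_sub_sq_smul s r lam zeta (hrs i).symm (hzeta2 i)
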